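/- arXiv:2505.18526 — 2 statements merged into one kernel-verified Lean document; each statement's English description precedes it below -/
import Mathlib

section
/- Let f ∈ ℝⁿ, σ² > 0, and for each positive definite n×n matrix Σ with K = Σ − σ²Iₙ, define the expected squared error E(Σ) = σ⁴‖Σ⁻¹f‖² + σ²‖Σ⁻¹K‖_F², where ‖·‖_F is the Frobenius norm. Then E(Σ) ≥ E(ffᵀ + σ²Iₙ), i.e., Σ = ffᵀ + σ²Iₙ minimizes E among positive definite matrices Σ with Σ − σ²Iₙ positive semi-definite. -/
open Matrix

/-- Expected squared error of the GP posterior mean: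
`E(Σ) = σ⁴‖S⁻¹f‖² + σ²‖S⁻¹K‖_F²` with `K = S − σ²I`. -/
noncomputable def expSqErr (n : ℕ) (f : Fin n → ℝ) (σ2 : ℝ)
    (S : Matrix (Fin n) (Fin n) ℝ) : ℝ :=
  σ2 ^ 2 * ((S⁻¹ *ᵥ f) ⬝ᵥ (S⁻¹ *ᵥ f)) +
    σ2 * ∑ i : Fin n, ∑ j : Fin n,
      ((S⁻¹ * (S - σ2 • (1 : Matrix (Fin n) (Fin n) ℝ))) i j) ^ 2

theorem expected_sq_err_minimized_at_rank1 (n : ℕ) (f : Fin n → ℝ) (σ2 : ℝ) (hσ : 0 < σ2)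
    (S : Matrix (Fin n) (Fin n) ℝ) (hS : S.PosDef)
    (hK : (S - σ2 • (1 : Matrix (Fin n) (Fin n) ℝ)).PosSemidef) :
    expSqErr n f σ2 (vecMulVec f f + σ2 • (1 : Matrix (Fin n) (Fin n) ℝ)) ≤
      expSqErr n f σ2 S := by
  classical
  set F : ℝ := f ⬝ᵥ f with hFdef
  have hFnn : 0 ≤ F := by
    apply Finset.sum_nonneg
    intro i _
    exact mul_self_nonneg _
  have hden : 0 < F + σ2 := by linarith
  set c : ℝ := (F + σ2)⁻¹ with hcdef
  set M : Matrix (Fin n) (Fin n) ℝ := vecMulVec f f + σ2 • 1 with hM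
  -- ffᵀ * ffᵀ = F • ffᵀ
  have key : vecMulVec f f * vecMulVec f f = F • vecMulVec f f := by
    ext i j
    simp only [mul_apply, vecMulVec_apply, Matrix.smul_apply, smul_eq_mul, hFdef, dotProduct,
      Finset.sum_mul]
    exact Finset.sum_congr rfl fun k _ => by ring
  have hMmul : M * vecMulVec f f = (F + σ2) • vecMulVec f f := by
    rw [hM, add_mul, key, smul_mul_assoc, one_mul, ← add_smul]
  -- the inverse of M
  have hMN : M * (σ2⁻¹ • ((1 : Matrix (Fin n) (Fin n) ℝ) - c • vecMulVec f f)) = 1 := by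
    rw [Matrix.mul_smul, Matrix.mul_sub, Matrix.mul_one, Matrix.mul_smul, hMmul, smul_smul,
      hcdef, inv_mul_cancel₀ hden.ne', one_smul]
    have : M - vecMulVec f f = σ2 • 1 := by rw [hM]; abel
    rw [this, smul_smul, inv_mul_cancel₀ hσ.ne', one_smul]
  have hMinv : M⁻¹ = σ2⁻¹ • ((1 : Matrix (Fin n) (Fin n) ℝ) - c • vecMulVec f f) :=
    inv_eq_right_inv hMN
  -- M⁻¹ *ᵥ f = c • f
  have hvf : vecMulVec f f *ᵥ f = F • f := by
    ext i
    simp only [mulVec, dotProduct, vecMulVec_apply, Pi.smul_apply, smul_eq_mul, hFdef]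
    rw [Finset.sum_mul]
    exact Finset.sum_congr rfl fun k _ => by ring
  have hcF : σ2⁻¹ * (1 - c * F) = c := by
    have : 1 - c * F = c * σ2 := by
      have h1 : c * (F + σ2) = 1 := inv_mul_cancel₀ hden.ne'
      nlinarith [h1]
    rw [this]
    field_simp
  have hMf : M⁻¹ *ᵥ f = c • f := by
    rw [hMinv, smul_mulVec, sub_mulVec, one_mulVec, smul_mulVec, hvf, smul_smul]
    ext i
    simp only [Pi.smul_apply, Pi.sub_apply, smul_eq_mul]
    linear_combination f i * hcF
  -- M⁻¹ * (M - σ2 • 1) = c • ffᵀ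
  have hMsub : M - σ2 • (1 : Matrix (Fin n) (Fin n) ℝ) = vecMulVec f f := by
    rw [hM]; abel
  have hB : M⁻¹ * (M - σ2 • (1 : Matrix (Fin n) (Fin n) ℝ)) = c • vecMulVec f f := by
    rw [hMsub, hMinv, smul_mul_assoc, sub_mul, one_mul, smul_mul_assoc, key, smul_smul]
    ext i j
    simp only [Matrix.smul_apply, Matrix.sub_apply, vecMulVec_apply, smul_eq_mul]
    linear_combination (f i * f j) * hcF
  -- value of the LHS
  have hLHS : expSqErr n f σ2 M = σ2 * F * c := by
    rw [expSqErr, hMf, hB]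
    have h1 : (c • f) ⬝ᵥ (c • f) = c * (c * F) := by
      rw [smul_dotProduct, dotProduct_smul, hFdef]; rfl
    have h2 : ∑ i : Fin n, ∑ j : Fin n, ((c • vecMulVec f f) i j) ^ 2 = c ^ 2 * F * F := by
      have e1 : ∀ i : Fin n, ∑ j : Fin n, ((c • vecMulVec f f) i j) ^ 2
          = c ^ 2 * (f i * f i) * F := by
        intro i
        rw [hFdef]
        simp only [dotProduct, Matrix.smul_apply, vecMulVec_apply, smul_eq_mul]
        rw [Finset.mul_sum]
        exact Finset.sum_congr rfl fun j _ => by ring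
      simp only [e1]
      rw [← Finset.sum_mul, hFdef]
      simp only [dotProduct]
      rw [← Finset.mul_sum]
    rw [h1, h2]
    have hc1 : c * (F + σ2) = 1 := inv_mul_cancel₀ hden.ne'
    linear_combination σ2 * F * c * hc1
  rw [hLHS]
  -- now the lower bound for the RHS
  have hinv : S⁻¹ * S = 1 :=
    nonsing_inv_mul S ((Matrix.isUnit_iff_isUnit_det S).1 hS.isUnit)
  set B : Matrix (Fin n) (Fin n) ℝ := S⁻¹ * (S - σ2 • 1) with hBdef
  set v : Fin n → ℝ := B *ᵥ f with hvdef
  set t : ℝ := v ⬝ᵥ v with htdef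
  set u : ℝ := f ⬝ᵥ v with hudef
  set W : ℝ := ∑ i : Fin n, ∑ j : Fin n, (B i j) ^ 2 with hWdef
  have hBeq : B = 1 - σ2 • S⁻¹ := by
    rw [hBdef, Matrix.mul_sub, hinv, Matrix.mul_smul, Matrix.mul_one]
  have hfv : f - v = σ2 • (S⁻¹ *ᵥ f) := by
    rw [hvdef, hBeq, sub_mulVec, one_mulVec, smul_mulVec]
    abel
  have hterm1 : σ2 ^ 2 * ((S⁻¹ *ᵥ f) ⬝ᵥ (S⁻¹ *ᵥ f)) = F - 2 * u + t := by
    have : (f - v) ⬝ᵥ (f - v) = σ2 ^ 2 * ((S⁻¹ *ᵥ f) ⬝ᵥ (S⁻¹ *ᵥ f)) := by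
      rw [hfv, smul_dotProduct, dotProduct_smul, smul_eq_mul, smul_eq_mul]
      ring
    rw [← this, sub_dotProduct, dotProduct_sub, dotProduct_sub, dotProduct_comm v f]
    rw [hFdef, hudef, htdef]
    ring
  have hu2 : u ^ 2 ≤ F * t := by
    have := Finset.sum_mul_sq_le_sq_mul_sq Finset.univ f v
    have hF2 : F = ∑ i : Fin n, f i ^ 2 := by
      rw [hFdef]; exact Finset.sum_congr rfl fun i _ => (pow_two (f i)).symm
    have ht2 : t = ∑ i : Fin n, v i ^ 2 := by
      rw [htdef]; exact Finset.sum_congr rfl fun i _ => (pow_two (v i)).symm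
    rw [hF2, ht2]
    exact this
  have htW : t ≤ F * W := by
    have hper : ∀ i : Fin n, (v i) ^ 2 ≤ (∑ j : Fin n, (B i j) ^ 2) * F := by
      intro i
      have := Finset.sum_mul_sq_le_sq_mul_sq Finset.univ (fun j => B i j) f
      have hF2 : ∑ j : Fin n, f j ^ 2 = F := by
        rw [hFdef]; exact Finset.sum_congr rfl fun j _ => (pow_two (f j))
      calc (v i) ^ 2 = (∑ j : Fin n, B i j * f j) ^ 2 := by
            rw [hvdef]; rfl
        _ ≤ (∑ j : Fin n, (B i j) ^ 2) * ∑ j : Fin n, f j ^ 2 := this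
        _ = (∑ j : Fin n, (B i j) ^ 2) * F := by rw [hF2]
    have ht2 : t = ∑ i : Fin n, (v i) ^ 2 := by
      rw [htdef]; exact Finset.sum_congr rfl fun i _ => (pow_two (v i)).symm
    calc t = ∑ i : Fin n, (v i) ^ 2 := ht2
      _ ≤ ∑ i : Fin n, (∑ j : Fin n, (B i j) ^ 2) * F := Finset.sum_le_sum fun i _ => hper i
      _ = W * F := by rw [hWdef, Finset.sum_mul]
      _ = F * W := mul_comm _ _
  have htnn : 0 ≤ t := by
    rw [htdef]
    apply Finset.sum_nonneg
    intro i _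
    exact mul_self_nonneg _
  have hWnn : 0 ≤ W := by
    rw [hWdef]
    apply Finset.sum_nonneg
    intro i _
    apply Finset.sum_nonneg
    intro j _
    exact sq_nonneg _
  have hRHS : expSqErr n f σ2 S = (F - 2 * u + t) + σ2 * W := by
    rw [expSqErr, hterm1, hWdef]
  rw [hRHS]
  have hc1 : c * (F + σ2) = 1 := inv_mul_cancel₀ hden.ne'
  rcases eq_or_lt_of_le hFnn with hF0 | hFpos
  · -- F = 0
    have hF0' : F = 0 := hF0.symm
    have ht0 : t = 0 := le_antisymm (by rw [hF0'] at htW; simpa using htW) htnn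
    have hu0 : u = 0 := by
      have : u ^ 2 ≤ 0 := by rw [hF0'] at hu2; simpa using hu2
      nlinarith [sq_nonneg u]
    rw [hF0', ht0, hu0]
    nlinarith [mul_nonneg hσ.le hWnn]
  · -- F > 0
    have h3 : σ2 * (F + σ2) * F * t ≤ σ2 * (F + σ2) * F * (F * W) :=
      mul_le_mul_of_nonneg_left htW (by positivity)
    have hmain : σ2 * F ≤ (F - 2 * u + t + σ2 * W) * (F + σ2) := by
      have hid : (F * F) * ((F - 2 * u + t + σ2 * W) * (F + σ2) - σ2 * F)
          = (F * F - F * u - σ2 * u) ^ 2 + (F * t - u ^ 2) * (F + σ2) ^ 2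
            + (σ2 * (F + σ2) * F * (F * W) - σ2 * (F + σ2) * F * t) := by
        ring
      have a1 := sq_nonneg (F * F - F * u - σ2 * u)
      have a2 : 0 ≤ (F * t - u ^ 2) * (F + σ2) ^ 2 :=
        mul_nonneg (by linarith [hu2]) (sq_nonneg _)
      have h4 : 0 ≤ (F * F) * ((F - 2 * u + t + σ2 * W) * (F + σ2) - σ2 * F) := by
        rw [hid]; linarith [h3]
      have h5 : 0 ≤ (F - 2 * u + t + σ2 * W) * (F + σ2) - σ2 * F :=
        (mul_nonneg_iff_of_pos_left (mul_pos hFpos hFpos)).mp h4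
      linarith
    have hceq : σ2 * F * c = σ2 * F / (F + σ2) := by
      rw [hcdef, div_eq_mul_inv, mul_assoc]
    rw [hceq, div_le_iff₀ hden]
    linarith [hmain]
end

section
/- Let p̃(y) = ∫ N(y; Φw, σ²Iₙ + C)·N(w; 0, Iᵣ) dw be the marginal likelihood of a corrected low-rank Gaussian model with symmetric positive semi-definite correction C. Then log p̃(y) ≥ log N(y; 0, ΦΦᵀ + σ²Iₙ) − (1/(2σ²))·tr(C). -/
open Matrix

lemma one_add_psd_aux (n : ℕ) (H : Matrix (Fin n) (Fin n) ℝ) (hH : H.PosSemidef) (z : Fin n → ℝ) :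
    Real.log (1 + H).det ≤ H.trace ∧ z ⬝ᵥ (1 + H)⁻¹ *ᵥ z ≤ z ⬝ᵥ z := by
  have hHerm := hH.1
  set V : Matrix (Fin n) (Fin n) ℝ := (hHerm.eigenvectorUnitary : Matrix (Fin n) (Fin n) ℝ) with hV
  set μ : Fin n → ℝ := hHerm.eigenvalues with hμ
  have hμ0 : ∀ i, 0 ≤ μ i := hH.eigenvalues_nonneg
  have h1μ : ∀ i, 0 < 1 + μ i := fun i => by linarith [hμ0 i]
  have hVsV : star V * V = 1 := by
    exact_mod_cast Unitary.star_mul_self_of_mem hHerm.eigenvectorUnitary.2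
  have hVVs : V * star V = 1 := by
    exact_mod_cast Unitary.mul_star_self_of_mem hHerm.eigenvectorUnitary.2
  have hspec : H = V * diagonal μ * star V := by
    simpa using hHerm.spectral_theorem
  have hone : 1 + H = V * diagonal (fun i => 1 + μ i) * star V := by
    have : diagonal (fun i => 1 + μ i) = 1 + diagonal μ := by
      rw [← diagonal_one, ← diagonal_add]
    rw [this, mul_add, add_mul, hspec, mul_one, hVVs]
  have hdet : (1 + H).det = ∏ i, (1 + μ i) := by
    rw [hone, det_mul, det_mul, mul_comm, ← mul_assoc, ← det_mul, hVsV, det_one, one_mul,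
      det_diagonal]
  have htr : H.trace = ∑ i, μ i := by
    rw [hspec, trace_mul_cycle, hVsV, one_mul, trace_diagonal]
  have hconj : ∀ (d₁ d₂ : Fin n → ℝ), (V * diagonal d₁ * star V) * (V * diagonal d₂ * star V)
      = V * diagonal (fun i => d₁ i * d₂ i) * star V := by
    intro d₁ d₂
    simp only [mul_assoc]
    rw [← mul_assoc (star V) V, hVsV, one_mul, ← mul_assoc (diagonal d₁), diagonal_mul_diagonal]
  have hinv : (1 + H)⁻¹ = V * diagonal (fun i => (1 + μ i)⁻¹) * star V := by
    apply inv_eq_right_inv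
    rw [hone, hconj]
    have : (fun i => (1 + μ i) * (1 + μ i)⁻¹) = fun _ => (1 : ℝ) := by
      funext i; exact mul_inv_cancel₀ (h1μ i).ne'
    rw [this, diagonal_one, mul_one, hVVs]
  constructor
  · rw [hdet, Real.log_prod (fun i _ => (h1μ i).ne'), htr]
    exact Finset.sum_le_sum fun i _ => by
      have := Real.log_le_sub_one_of_pos (h1μ i)
      linarith
  · have hsv : Vᵀ = star V := by
      rw [star_eq_conjTranspose, conjTranspose_eq_transpose_of_trivial]
    have hws : ∀ (d : Fin n → ℝ), z ⬝ᵥ (V * diagonal d * star V) *ᵥ z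
        = ∑ i, d i * ((z ᵥ* V) i)^2 := by
      intro d
      rw [← mulVec_mulVec, ← mulVec_mulVec, dotProduct_mulVec, ← hsv, mulVec_transpose]
      simp only [dotProduct, mulVec_diagonal]
      exact Finset.sum_congr rfl fun i _ => by ring
    have hzz : z ⬝ᵥ z = ∑ i, ((z ᵥ* V) i)^2 := by
      have := hws (fun _ => 1)
      rw [diagonal_one, mul_one, hVVs] at this
      simpa using this
    rw [hinv, hws, hzz]
    exact Finset.sum_le_sum fun i _ => by
      have h1 : (1 + μ i)⁻¹ ≤ 1 := by
        rw [inv_le_one_iff₀]; right; linarith [hμ0 i]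
      nlinarith [sq_nonneg ((z ᵥ* V) i)]

lemma quad_bound_aux (n : ℕ) (A : Matrix (Fin n) (Fin n) ℝ) (hA : A.PosDef) (s : ℝ) (hs : 0 < s)
    (hP : (A - s • 1).PosSemidef) (x : Fin n → ℝ) :
    x ⬝ᵥ A⁻¹ *ᵥ x ≤ s⁻¹ * (x ⬝ᵥ x) := by
  have hAs : Aᵀ = A := hA.1
  set u : Fin n → ℝ := A⁻¹ *ᵥ x with hu
  have hAu : A *ᵥ u = x := by
    rw [hu, mulVec_mulVec, mul_nonsing_inv _ hA.det_pos.ne'.isUnit, one_mulVec]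
  have e1 : x ⬝ᵥ A⁻¹ *ᵥ x = u ⬝ᵥ A *ᵥ u := by
    conv_rhs => rw [hAu]
    exact dotProduct_comm x u
  have e2 : x ⬝ᵥ x = u ⬝ᵥ (A * A) *ᵥ u := by
    have : u ⬝ᵥ (A * A) *ᵥ u = x ⬝ᵥ x := by
      rw [← mulVec_mulVec, hAu, dotProduct_mulVec, ← mulVec_transpose, hAs, hAu]
    exact this.symm
  have hX : (A * A - s • A).PosSemidef := by
    have hid : A * A - s • A = (A - s • 1) * (A - s • 1) + s • (A - s • 1) := by
      simp only [sub_mul, mul_sub, smul_mul_assoc, mul_smul_comm, smul_sub, mul_one, one_mul,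
        smul_smul]
      abel
    rw [hid]
    refine PosSemidef.add ?_ ?_
    · simpa [pow_two] using hP.pow 2
    · refine .of_dotProduct_mulVec_nonneg ?_ fun y => ?_
      · show (s • (A - s • 1))ᴴ = s • (A - s • 1)
        rw [conjTranspose_smul, hP.1.eq]
        simp
      · have := hP.dotProduct_mulVec_nonneg y
        simp only [smul_mulVec, dotProduct_smul, smul_eq_mul] at this ⊢
        exact mul_nonneg hs.le this
  have e3 := hX.dotProduct_mulVec_nonneg u
  simp only [sub_mulVec, dotProduct_sub, smul_mulVec, dotProduct_smul, smul_eq_mul,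
    star_trivial, RCLike.ofReal_real_eq_id] at e3
  norm_num at e3
  rw [e1, e2]
  rw [le_inv_mul_iff₀ hs]
  linarith

lemma trace_mul_inv_le_aux (n : ℕ) (A C : Matrix (Fin n) (Fin n) ℝ) (hC : C.PosSemidef) (s : ℝ)
    (hq : ∀ x : Fin n → ℝ, x ⬝ᵥ A⁻¹ *ᵥ x ≤ s⁻¹ * (x ⬝ᵥ x)) :
    (C * A⁻¹).trace ≤ s⁻¹ * C.trace := by
  obtain ⟨B, hB⟩ := by open scoped MatrixOrder in exact CStarAlgebra.nonneg_iff_eq_star_mul_self.mp hC.nonneg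
  rw [star_eq_conjTranspose] at hB
  have key : ∀ i, ((B * A⁻¹) * Bᴴ) i i = (fun j => B i j) ⬝ᵥ A⁻¹ *ᵥ (fun j => B i j) := by
    intro i
    rw [dotProduct_mulVec]
    simp only [mul_apply, conjTranspose_apply, dotProduct, vecMul, star_trivial]
  have h1 : (C * A⁻¹).trace = ∑ i, (fun j => B i j) ⬝ᵥ A⁻¹ *ᵥ (fun j => B i j) := by
    rw [hB, mul_assoc, trace_mul_comm]
    simp only [Matrix.trace, Matrix.diag]
    exact Finset.sum_congr rfl fun i _ => key i
  have h2 : C.trace = ∑ i, (fun j => B i j) ⬝ᵥ (fun j => B i j) := by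
    rw [hB, trace_mul_comm]
    simp only [Matrix.trace, Matrix.diag, mul_apply, conjTranspose_apply, dotProduct, star_trivial]
  rw [h1, h2, Finset.mul_sum]
  exact Finset.sum_le_sum fun i _ => hq _

/-- Log-density of a multivariate Gaussian `N(0, S)` at `y`. -/
noncomputable def logGaussZero (n : ℕ) (S : Matrix (Fin n) (Fin n) ℝ)
    (y : Fin n → ℝ) : ℝ :=
  -((n : ℝ) / 2) * Real.log (2 * Real.pi) - (1 / 2) * Real.log S.det
    - (1 / 2) * (y ⬝ᵥ S⁻¹ *ᵥ y)

theorem corrected_lml_trace_bound (n r : ℕ) (Φ : Matrix (Fin n) (Fin r) ℝ)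
    (σ2 : ℝ) (hσ : 0 < σ2) (y : Fin n → ℝ)
    (C : Matrix (Fin n) (Fin n) ℝ) (hC : C.PosSemidef) :
    logGaussZero n (Φ * Φᵀ + C + σ2 • (1 : Matrix (Fin n) (Fin n) ℝ)) y ≥
      logGaussZero n (Φ * Φᵀ + σ2 • (1 : Matrix (Fin n) (Fin n) ℝ)) y
        - (1 / (2 * σ2)) * C.trace := by
  set A : Matrix (Fin n) (Fin n) ℝ := Φ * Φᵀ + σ2 • 1 with hAdef
  have hΦ : (Φ * Φᵀ).PosSemidef := by
    have := posSemidef_self_mul_conjTranspose Φ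
    rwa [conjTranspose_eq_transpose_of_trivial] at this
  have hsm : (σ2 • (1 : Matrix (Fin n) (Fin n) ℝ)).PosDef := by
    have h : (σ2 • (1 : Matrix (Fin n) (Fin n) ℝ)) = diagonal (fun _ => σ2) := by
      ext i j
      simp only [Matrix.smul_apply, Matrix.one_apply, Matrix.diagonal_apply, smul_eq_mul]
      split <;> simp
    rw [h]
    exact posDef_diagonal_iff.mpr fun _ => hσ
  have hA : A.PosDef := Matrix.PosDef.posSemidef_add hΦ hsm
  have hAC : (A + C).PosDef := hA.add_posSemidef hC
  set S : Matrix (Fin n) (Fin n) ℝ := (open scoped MatrixOrder in CFC.sqrt A) with hSdef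
  have hSS : S * S = A := by open scoped MatrixOrder in exact CFC.sqrt_mul_sqrt_self A hA.posSemidef.nonneg
  have hSherm : S.IsHermitian := by open scoped MatrixOrder in exact (CFC.sqrt_nonneg A).posSemidef.1
  have hSdet : S.det ≠ 0 := by
    intro h
    have : A.det = 0 := by rw [← hSS, det_mul, h, mul_zero]
    exact hA.det_pos.ne' this
  have hSinv : S * S⁻¹ = 1 := mul_nonsing_inv _ hSdet.isUnit
  have hSinv' : S⁻¹ * S = 1 := nonsing_inv_mul _ hSdet.isUnit
  have hST : Sᵀ = S := by
    rw [← conjTranspose_eq_transpose_of_trivial, hSherm.eq]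
  have hSiT : S⁻¹ᵀ = S⁻¹ := by rw [transpose_nonsing_inv, hST]
  have hSiH : S⁻¹ᴴ = S⁻¹ := by
    rw [conjTranspose_eq_transpose_of_trivial, hSiT]
  set M : Matrix (Fin n) (Fin n) ℝ := S⁻¹ * C * S⁻¹ with hMdef
  have hM : M.PosSemidef := by
    have := hC.mul_mul_conjTranspose_same S⁻¹
    rwa [hSiH] at this
  have hACS : A + C = S * (1 + M) * S := by
    rw [mul_add, add_mul, mul_one, hSS]
    congr 1
    rw [hMdef]
    simp only [← mul_assoc]
    rw [hSinv, one_mul, mul_assoc, hSinv', mul_one]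
  have hAinv : A⁻¹ = S⁻¹ * S⁻¹ := by rw [← hSS, Matrix.mul_inv_rev]
  have hdet : (A + C).det = A.det * (1 + M).det := by
    rw [hACS, det_mul, det_mul, mul_comm, ← mul_assoc, ← det_mul, hSS]
  have hdet1M : 0 < (1 + M).det := by
    have h1 := hAC.det_pos
    rw [hdet] at h1
    nlinarith [hA.det_pos]
  -- quadratic bound hypothesis for A
  have hPsub : (A - σ2 • 1).PosSemidef := by
    have : A - σ2 • (1 : Matrix (Fin n) (Fin n) ℝ) = Φ * Φᵀ := by
      rw [hAdef]; abel
    rwa [this]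
  have hq : ∀ x : Fin n → ℝ, x ⬝ᵥ A⁻¹ *ᵥ x ≤ σ2⁻¹ * (x ⬝ᵥ x) :=
    quad_bound_aux n A hA σ2 hσ hPsub
  have htrM : M.trace = (C * A⁻¹).trace := by
    rw [hMdef, hAinv, trace_mul_cycle, trace_mul_comm]
  have hlog : Real.log (A + C).det ≤ Real.log A.det + σ2⁻¹ * C.trace := by
    rw [hdet, Real.log_mul hA.det_pos.ne' hdet1M.ne']
    have h1 := (one_add_psd_aux n M hM 0).1
    have h2 := trace_mul_inv_le_aux n A C hC σ2 hq
    rw [htrM] at h1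
    linarith
  -- quadratic part
  have hBinv : (A + C)⁻¹ = S⁻¹ * ((1 + M)⁻¹ * S⁻¹) := by
    rw [hACS, Matrix.mul_inv_rev, Matrix.mul_inv_rev]
  set z : Fin n → ℝ := S⁻¹ *ᵥ y with hz
  have hvm : y ᵥ* S⁻¹ = z := by rw [hz, ← hSiT, mulVec_transpose, hSiT]
  have hq1 : y ⬝ᵥ (A + C)⁻¹ *ᵥ y = z ⬝ᵥ (1 + M)⁻¹ *ᵥ z := by
    rw [hBinv, ← mulVec_mulVec, dotProduct_mulVec, hvm, ← mulVec_mulVec]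
  have hq2 : y ⬝ᵥ A⁻¹ *ᵥ y = z ⬝ᵥ z := by
    rw [hAinv, ← mulVec_mulVec, dotProduct_mulVec, hvm]
  have hquad : y ⬝ᵥ (A + C)⁻¹ *ᵥ y ≤ y ⬝ᵥ A⁻¹ *ᵥ y := by
    rw [hq1, hq2]
    exact (one_add_psd_aux n M hM z).2
  -- final assembly
  have hre : Φ * Φᵀ + C + σ2 • (1 : Matrix (Fin n) (Fin n) ℝ) = A + C := by
    rw [hAdef]; abel
  rw [hre]
  simp only [logGaussZero, ge_iff_le]
  have hc : (1 : ℝ) / (2 * σ2) * C.trace = (1 / 2) * (σ2⁻¹ * C.trace) := by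
    field_simp
  rw [hc]
  linarith
end
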